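/- Let G be a connected bipartite graph on n ≥ 3 vertices whose Randić matrix R satisfies R_{−1}(G) ≤ n/4 and has both 1 and −1 as eigenvalues. Then RE(G) ≤ √(n−2)·√(n−4)·(√2)/2 + 2. -/

import Mathlib

open scoped Classical

noncomputable def randicMatrix {V : Type*} [Fintype V] (G : SimpleGraph V)
    [DecidableRel G.Adj] : Matrix V V ℝ :=
  fun u v =>
    if G.Adj u v then 1 / Real.sqrt ((G.degree u : ℝ) * (G.degree v : ℝ)) else 0

noncomputable def randicIndex {V : Type*} [Fintype V] (G : SimpleGraph V)
    [DecidableRel G.Adj] : ℝ :=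
  (1 / 2) * ∑ u, ∑ v, if G.Adj u v then 1 / ((G.degree u : ℝ) * (G.degree v : ℝ)) else 0

/-! Since the Randić matrix `R` is symmetric, `∑ λᵢ² = tr (R²) = 2 R₋₁(G) ≤ n / 2`. Removing the
eigenvalues `1` and `-1` leaves `n - 2` eigenvalues with `∑ λᵢ² ≤ n / 2 - 2`, and Cauchy–Schwarz
bounds the sum of their absolute values by `√(n - 2) · √(n / 2 - 2)`. -/

theorem Matrix.trace_conjStarAlgAut {𝕜 n : Type*} [RCLike 𝕜] [Fintype n] [DecidableEq n]
    (u : unitary (Matrix n n 𝕜)) (M : Matrix n n 𝕜) :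
    (Unitary.conjStarAlgAut 𝕜 _ u M).trace = M.trace := by
  rw [Unitary.conjStarAlgAut_apply, Matrix.trace_mul_cycle, Unitary.coe_star_mul_self,
    Matrix.one_mul]

theorem Matrix.IsHermitian.trace_mul_self_eq_sum_sq_eigenvalues {𝕜 n : Type*} [RCLike 𝕜]
    [Fintype n] [DecidableEq n] {A : Matrix n n 𝕜} (hA : A.IsHermitian) :
    (A * A).trace = ∑ i, (hA.eigenvalues i : 𝕜) ^ 2 := by
  conv_lhs => rw [hA.spectral_theorem, ← map_mul]
  rw [Matrix.trace_conjStarAlgAut, Matrix.diagonal_mul_diagonal, Matrix.trace_diagonal]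
  simp [sq]

theorem Finset.sum_abs_le_sqrt_card_mul_sum_sq {ι : Type*} (s : Finset ι) (f : ι → ℝ) :
    ∑ i ∈ s, |f i| ≤ √(s.card * ∑ i ∈ s, f i ^ 2) := by
  refine Real.le_sqrt_of_sq_le ?_
  simpa only [sq_abs] using sq_sum_le_card_mul_sum_sq (s := s) (f := fun i => |f i|)

theorem sum_abs_le_of_abs_eq_one_of_sum_sq_le {ι : Type*} [Fintype ι] [DecidableEq ι]
    {f : ι → ℝ} {i j : ι} (hij : i ≠ j) (hi : |f i| = 1) (hj : |f j| = 1) {S : ℝ}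
    (hS : ∑ k, f k ^ 2 ≤ S) :
    ∑ k, |f k| ≤ √(Fintype.card ι - 2) * √(S - 2) + 2 := by
  set s : Finset ι := Finset.univ \ {i, j}
  have hsplit : ∀ g : ι → ℝ, ∑ k, g k = ∑ k ∈ s, g k + (g i + g j) := fun g => by
    rw [← Finset.sum_sdiff (Finset.subset_univ {i, j}), Finset.sum_pair hij]
  have hcard : (s.card : ℝ) = Fintype.card ι - 2 := by
    have hle := Finset.card_le_univ {i, j}
    rw [Finset.card_pair hij] at hle
    rw [Finset.card_univ_sdiff, Finset.card_pair hij, Nat.cast_sub hle, Nat.cast_two]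
  have hsq : ∑ k ∈ s, f k ^ 2 ≤ S - 2 := by
    have := hsplit (f · ^ 2)
    simp only [← sq_abs (f i), ← sq_abs (f j), hi, hj] at this
    linarith
  calc ∑ k, |f k| = ∑ k ∈ s, |f k| + 2 := by rw [hsplit, hi, hj]; norm_num
    _ ≤ √(s.card * ∑ k ∈ s, f k ^ 2) + 2 := by gcongr; exact s.sum_abs_le_sqrt_card_mul_sum_sq f
    _ ≤ √(s.card * (S - 2)) + 2 := by gcongr
    _ = √(Fintype.card ι - 2) * √(S - 2) + 2 := by rw [Real.sqrt_mul (Nat.cast_nonneg _), hcard]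

theorem trace_randicMatrix_mul_self {V : Type*} [Fintype V] (G : SimpleGraph V)
    [DecidableRel G.Adj] : (randicMatrix G * randicMatrix G).trace = 2 * randicIndex G := by
  have hentry : ∀ u v, randicMatrix G u v * randicMatrix G v u =
      if G.Adj u v then 1 / ((G.degree u : ℝ) * (G.degree v : ℝ)) else 0 := by
    intro u v
    by_cases h : G.Adj u v
    · simp only [randicMatrix, h, h.symm, if_true, mul_comm (G.degree v : ℝ), div_mul_div_comm,
        one_mul, Real.mul_self_sqrt (by positivity : (0 : ℝ) ≤ G.degree u * G.degree v)]
    · simp [randicMatrix, h, G.adj_comm]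
  simp only [Matrix.trace, Matrix.diag, Matrix.mul_apply, hentry, randicIndex]
  ring

theorem Real.sqrt_div_two_sub_two (x : ℝ) : √(x / 2 - 2) = √(x - 4) * √2 / 2 := by
  rw [show x / 2 - 2 = (x - 4) / 2 by ring, Real.sqrt_div' _ zero_le_two]
  field_simp
  rw [Real.sq_sqrt zero_le_two]

theorem randic_energy_bound_bipartite_no_suspended_paths_general {V : Type*} [Fintype V]
    (G : SimpleGraph V) [DecidableRel G.Adj] (n : ℕ)
    (hn : Fintype.card V = n)
    (hR : (randicMatrix G).IsHermitian)
    (hRI : randicIndex G ≤ (n : ℝ) / 4)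
    (h1 : ∃ i, hR.eigenvalues i = 1) (hneg1 : ∃ i, hR.eigenvalues i = -1) :
    ∑ i, |hR.eigenvalues i| ≤
      Real.sqrt ((n : ℝ) - 2) * Real.sqrt ((n : ℝ) - 4) * Real.sqrt 2 / 2 + 2 := by
  obtain ⟨i, hi⟩ := h1
  obtain ⟨j, hj⟩ := hneg1
  have hij : i ≠ j := by rintro rfl; linarith
  have hsq : ∑ k, hR.eigenvalues k ^ 2 ≤ n / 2 := by
    have := hR.trace_mul_self_eq_sum_sq_eigenvalues
    rw [trace_randicMatrix_mul_self] at this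
    simp only [RCLike.ofReal_real_eq_id, id] at this
    linarith
  calc ∑ k, |hR.eigenvalues k| ≤ √(Fintype.card V - 2) * √(n / 2 - 2) + 2 :=
        sum_abs_le_of_abs_eq_one_of_sum_sq_le hij (by simp [hi]) (by simp [hj]) hsq
    _ = √(n - 2) * √(n - 4) * √2 / 2 + 2 := by rw [hn, Real.sqrt_div_two_sub_two]; ring

theorem randic_energy_bound_bipartite_no_suspended_paths {V : Type*} [Fintype V]
    (G : SimpleGraph V) [DecidableRel G.Adj] (n : ℕ)
    (hn : Fintype.card V = n) (hn3 : 3 ≤ n) (hconn : G.Connected)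
    (hbip : G.Colorable 2)
    (hR : (randicMatrix G).IsHermitian)
    (hRI : randicIndex G ≤ (n : ℝ) / 4)
    (h1 : ∃ i, hR.eigenvalues i = 1) (hneg1 : ∃ i, hR.eigenvalues i = -1) :
    ∑ i, |hR.eigenvalues i| ≤
      Real.sqrt ((n : ℝ) - 2) * Real.sqrt ((n : ℝ) - 4) * Real.sqrt 2 / 2 + 2 :=
  randic_energy_bound_bipartite_no_suspended_paths_general G n hn hR hRI h1 hneg1
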